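/- Let A be a complete abelian category and ⋯ → X_3 → X_2 → X_1 an inverse system of chain maps of complexes in C(A), each of which is a degree-wise split epimorphism. If every X_i is contractible, then the inverse limit lim_i X_i is contractible. -/

import Mathlib

open CategoryTheory CategoryTheory.Limits

/-!
A contraction of `X` can be lifted along a degreewise split epimorphism `f : X ⟶ Y` to one
lying over any prescribed contraction of `Y`. Choosing such lifts inductively gives contractions
of all the `Xₙ` compatible with the transition maps, and since limits of complexes are computed
degreewise, they assemble into a contraction of the limit.
-/

namespace Homotopy

variable {V : Type*} [Category V] [Preadditive V] {ι : Type*} {c : ComplexShape ι}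

section Lift

variable {X Y : HomologicalComplex V c}

lemma nullHomotopicMap_sub (a b : ∀ i j, X.X i ⟶ Y.X j) :
    nullHomotopicMap (a - b) = nullHomotopicMap a - nullHomotopicMap b := by
  ext i
  simp only [nullHomotopicMap, map_sub, HomologicalComplex.sub_f_apply]
  abel

lemma nullHomotopicMap_hom {f g : X ⟶ Y} (H : Homotopy f g) :
    nullHomotopicMap H.hom = f - g := by
  ext i
  simp [nullHomotopicMap, H.comm i]

theorem exists_contraction_lift (f : X ⟶ Y) [∀ i, IsSplitEpi (f.f i)]
    (U : Homotopy (𝟙 X) 0) (T : Homotopy (𝟙 Y) 0) :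
    ∃ U' : Homotopy (𝟙 X) 0, ∀ i j, U'.hom i j ≫ f.f j = f.f i ≫ T.hom i j := by
  -- `h = U f - f T` satisfies `d h + h d = f - f = 0`, so `e = d lift + lift d` is killed by `f`;
  -- `U - lift + U e` is again a contraction, and it lies over `T`.
  let h : ∀ i j, X.X i ⟶ Y.X j := fun i j => U.hom i j ≫ f.f j - f.f i ≫ T.hom i j
  let lift : ∀ i j, X.X i ⟶ X.X j := fun i j => h i j ≫ section_ (f.f j)
  have lift_comp (i j : ι) : lift i j ≫ f.f j = h i j := by simp [lift]
  let e := nullHomotopicMap lift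
  have e_comp : e ≫ f = 0 := by
    have : nullHomotopicMap h = 0 := by
      change nullHomotopicMap
        ((fun i j => U.hom i j ≫ f.f j) - fun i j => f.f i ≫ T.hom i j) = 0
      rw [nullHomotopicMap_sub, ← nullHomotopicMap_comp, ← comp_nullHomotopicMap,
        nullHomotopicMap_hom, nullHomotopicMap_hom]
      simp
    simpa [e, nullHomotopicMap_comp, lift_comp] using this
  refine ⟨{ hom := fun i j => U.hom i j - lift i j + U.hom i j ≫ e.f j
            zero := fun i j hij => by simp [lift, h, U.zero i j hij, T.zero i j hij]
            comm := fun i => ?_ }, fun i j => ?_⟩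
  · have hU : 𝟙 (X.X i) = dNext i U.hom + prevD i U.hom := by simpa using U.comm i
    have he : e.f i = dNext i lift + prevD i lift := rfl
    have hUe : dNext i U.hom ≫ e.f i + prevD i U.hom ≫ e.f i = e.f i := by
      rw [← Preadditive.add_comp, ← hU, Category.id_comp]
    simp only [HomologicalComplex.id_f, HomologicalComplex.zero_f, add_zero]
    change 𝟙 _ = dNext i (U.hom - lift + fun i j => U.hom i j ≫ e.f j) +
      prevD i (U.hom - lift + fun i j => U.hom i j ≫ e.f j)
    rw [map_add, map_sub, map_add, map_sub, dNext_comp_right, prevD_comp_right]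
    calc 𝟙 (X.X i) = dNext i U.hom + prevD i U.hom + (dNext i U.hom ≫ e.f i +
          prevD i U.hom ≫ e.f i - (dNext i lift + prevD i lift)) := by
          rw [hUe, he, sub_self, add_zero, hU]
      _ = _ := by abel
  · have := congr_arg (fun φ => U.hom i j ≫ φ.f j) e_comp
    simp only [HomologicalComplex.comp_f, HomologicalComplex.zero_f, comp_zero] at this
    simp [Preadditive.add_comp, Preadditive.sub_comp, lift_comp, h, this]

end Lift

section Limits

variable {J : Type*} [Category J] {F : J ⥤ HomologicalComplex V c} {s : Cone F}

noncomputable def ofIsLimit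
    (hs : ∀ k, IsLimit ((HomologicalComplex.eval V c k).mapCone s))
    {W : HomologicalComplex V c} {φ ψ : W ⟶ s.pt}
    (H : ∀ j, Homotopy (φ ≫ s.π.app j) (ψ ≫ s.π.app j))
    (hH : ∀ ⦃j j' : J⦄ (g : j ⟶ j') (a b : ι),
      (H j).hom a b ≫ (F.map g).f b = (H j').hom a b) :
    Homotopy φ ψ := by
  let hom (a b : ι) : W.X a ⟶ s.pt.X b := (hs b).lift
    { pt := W.X a
      π := { app := fun j => (H j).hom a b
             naturality := fun j j' g => by
              change 𝟙 _ ≫ (H j').hom a b = (H j).hom a b ≫ (F.map g).f b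
              rw [Category.id_comp, hH] } }
  have hom_comp (a b : ι) (j : J) : hom a b ≫ (s.π.app j).f b = (H j).hom a b :=
    (hs b).fac _ j
  refine
    { hom := hom
      zero := fun a b hab => (hs b).hom_ext fun j => ?_
      comm := fun i => (hs i).hom_ext fun j => ?_ }
  · change hom a b ≫ (s.π.app j).f b = 0 ≫ (s.π.app j).f b
    rw [hom_comp, (H j).zero a b hab, zero_comp]
  · change φ.f i ≫ (s.π.app j).f i =
      (dNext i hom + prevD i hom + ψ.f i) ≫ (s.π.app j).f i
    rw [Preadditive.add_comp, Preadditive.add_comp, ← dNext_comp_right, ← prevD_comp_right]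
    simp only [hom_comp]
    simpa using (H j).comm i

noncomputable def contractionOfIsLimit
    (hs : ∀ k, IsLimit ((HomologicalComplex.eval V c k).mapCone s))
    (S : ∀ j, Homotopy (𝟙 (F.obj j)) 0)
    (hS : ∀ ⦃j j' : J⦄ (g : j ⟶ j') (a b : ι),
      (S j).hom a b ≫ (F.map g).f b = (F.map g).f a ≫ (S j').hom a b) :
    Homotopy (𝟙 s.pt) 0 :=
  ofIsLimit hs
    (fun j => (Homotopy.ofEq (by simp)).trans
      (((S j).compLeft (s.π.app j)).trans (Homotopy.ofEq (by simp))))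
    (fun j j' g a b => by
      simp only [Functor.const_obj_obj, trans_hom, ofEq_hom, Pi.zero_apply, compLeft_hom,
        add_zero, zero_add, Category.assoc, hS]
      rw [← s.w g, HomologicalComplex.comp_f, Category.assoc])

end Limits

theorem exists_compatible_contractions (F : ℕᵒᵖ ⥤ HomologicalComplex V c)
    (hsplit : ∀ (n : ℕ) (i : ι),
      IsSplitEpi ((F.map (homOfLE (Nat.le_succ n)).op).f i))
    (hcontr : ∀ n : ℕ, Nonempty (Homotopy (𝟙 (F.obj (Opposite.op n))) 0)) :
    ∃ S : ∀ j, Homotopy (𝟙 (F.obj j)) 0, ∀ ⦃j j' : ℕᵒᵖ⦄ (g : j ⟶ j') (a b : ι),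
      (S j).hom a b ≫ (F.map g).f b = (F.map g).f a ≫ (S j').hom a b := by
  have lift (n : ℕ) (T : Homotopy (𝟙 (F.obj (Opposite.op n))) 0) :=
    have := hsplit n
    exists_contraction_lift (F.map (homOfLE (Nat.le_succ n)).op) (hcontr (n + 1)).some T
  choose next hnext using lift
  let S (n : ℕ) : Homotopy (𝟙 (F.obj (Opposite.op n))) 0 :=
    Nat.rec (hcontr 0).some next n
  refine ⟨fun j => S j.unop, fun j j' g a b => ?_⟩
  let η : F ⋙ HomologicalComplex.eval V c a ⟶ F ⋙ HomologicalComplex.eval V c b :=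
    NatTrans.ofOpSequence (fun n => (S n).hom a b) (fun n => (hnext n (S n) a b).symm)
  exact (η.naturality g).symm

end Homotopy

/-- Let `A` be a complete abelian category and `⋯ → X₃ → X₂ → X₁` an inverse
system of chain maps of complexes in `C(A)`, each of which is a degree-wise split
epimorphism.  If every `Xᵢ` is contractible, then the inverse limit `lim Xᵢ` is
contractible. -/
theorem limit_contractible_of_degreewise_split_epi
    (A : Type*) [Category A] [Abelian A] [HasLimits A]
    (F : ℕᵒᵖ ⥤ ChainComplex A ℤ)
    (hsplit : ∀ (n : ℕ) (i : ℤ),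
      IsSplitEpi ((F.map (homOfLE (Nat.le_succ n)).op).f i))
    (hcontr : ∀ n : ℕ, Nonempty (Homotopy (𝟙 (F.obj (Opposite.op n))) 0)) :
    Nonempty (Homotopy (𝟙 (limit F)) 0) := by
  obtain ⟨S, hS⟩ := Homotopy.exists_compatible_contractions F hsplit hcontr
  have hL k := isLimitOfPreserves (HomologicalComplex.eval A _ k) (limit.isLimit F)
  exact ⟨Homotopy.contractionOfIsLimit hL S hS⟩
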